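/- Let n ≥ 3, m ≥ 2, ε ∈ (0, 4/(n−2)), and let u be a radial Neumann solution with exactly m−1 interior zeros, largest interior zero ρ_1 ∈ (0,1). Then u(1) ≠ 0 and |u(1)|^{4/(n−2)−ε} = (n−2)·ρ_1^{n−2} / ∫_{ρ_1}^{1} |u(s)/u(1)|^{4/(n−2)−ε}·(u(s)/u(1))·s·(s^{n−2} − ρ_1^{n−2}) ds. -/

import Mathlib

open Real Set Filter Topology MeasureTheory

noncomputable section

/-- `κ_n = ((n-2)/4) · Γ(n/2)² / Γ(n)`. -/
def kappa (n : ℕ) : ℝ :=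
  (((n : ℝ) - 2) / 4) * Real.Gamma ((n : ℝ) / 2) ^ 2 / Real.Gamma (n : ℝ)

/-- `p_ε = (n+2)/(n-2) - ε`. -/
def pEps (n : ℕ) (ε : ℝ) : ℝ := ((n : ℝ) + 2) / ((n : ℝ) - 2) - ε

/-- `u ∈ C²([0,1])` is a radial solution of `-Δu = |u|^{p-1} u` on the unit ball of `ℝⁿ`,
written in the radial variable: `(r^{n-1} u')' = -|u|^{p-1} u · r^{n-1}` on `(0,1]`,
with `u'(0) = 0`. -/
def IsRadialSolution (n : ℕ) (p : ℝ) (u : ℝ → ℝ) : Prop :=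
  ContDiffOn ℝ 2 u (Set.Icc 0 1) ∧ deriv u 0 = 0 ∧
    ∀ r ∈ Set.Ioc (0 : ℝ) 1,
      deriv (fun s => s ^ (n - 1) * deriv u s) r = -(|u r| ^ (p - 1) * u r * r ^ (n - 1))

/-- Radial Dirichlet solution with exactly `m-1` interior zeros, together with the
decreasing enumeration of its zeros `ρ 1 = 1 > ρ 2 > … > ρ m > 0` in `(0,1]` and of its
critical points `1 > δ 1 > … > δ m = 0` in `[0,1]`, interlaced as
`0 = δ m < ρ m < δ (m-1) < … < δ 1 < ρ 1 = 1`. -/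
def DirichletData (n : ℕ) (p : ℝ) (m : ℕ) (u : ℝ → ℝ) (ρ δ : ℕ → ℝ) : Prop :=
  IsRadialSolution n p u ∧ u 1 = 0 ∧ ρ 1 = 1 ∧ δ m = 0 ∧
    (∀ k, 1 ≤ k → k ≤ m → δ k < ρ k) ∧
    (∀ k, 1 ≤ k → k + 1 ≤ m → ρ (k + 1) < δ k) ∧
    {r : ℝ | r ∈ Set.Ioc (0 : ℝ) 1 ∧ u r = 0} = ρ '' Set.Icc 1 m ∧
    {r : ℝ | r ∈ Set.Icc (0 : ℝ) 1 ∧ deriv u r = 0} = δ '' Set.Icc 1 m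

/-- Radial Neumann solution with exactly `m-1` interior zeros, together with the
decreasing enumeration of its zeros `1 > ρ 1 > … > ρ (m-1) > 0` in `(0,1)` and of its
critical points `δ 1 = 1 > δ 2 > … > δ m = 0` in `[0,1]`, interlaced as
`0 = δ m < ρ (m-1) < δ (m-1) < … < ρ 1 < δ 1 = 1`. -/
def NeumannData (n : ℕ) (p : ℝ) (m : ℕ) (u : ℝ → ℝ) (ρ δ : ℕ → ℝ) : Prop :=
  IsRadialSolution n p u ∧ deriv u 1 = 0 ∧ δ 1 = 1 ∧ δ m = 0 ∧
    (∀ k, 1 ≤ k → k ≤ m - 1 → ρ k < δ k) ∧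
    (∀ k, 1 ≤ k → k ≤ m - 1 → δ (k + 1) < ρ k) ∧
    {r : ℝ | r ∈ Set.Ioo (0 : ℝ) 1 ∧ u r = 0} = ρ '' Set.Icc 1 (m - 1) ∧
    {r : ℝ | r ∈ Set.Icc (0 : ℝ) 1 ∧ deriv u r = 0} = δ '' Set.Icc 1 m

/-- A nontrivial radial Dirichlet solution with exactly `m-1` interior zeros. -/
def DirichletSol (n : ℕ) (p : ℝ) (m : ℕ) (u : ℝ → ℝ) : Prop :=
  IsRadialSolution n p u ∧ u 1 = 0 ∧ (∃ r ∈ Set.Icc (0 : ℝ) 1, u r ≠ 0) ∧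
    ∃ Z : Finset ℝ, (Z : Set ℝ) = {r | r ∈ Set.Ioo (0 : ℝ) 1 ∧ u r = 0} ∧ Z.card = m - 1

/-- A nontrivial radial Neumann solution with exactly `m-1` interior zeros. -/
def NeumannSol (n : ℕ) (p : ℝ) (m : ℕ) (u : ℝ → ℝ) : Prop :=
  IsRadialSolution n p u ∧ deriv u 1 = 0 ∧ (∃ r ∈ Set.Icc (0 : ℝ) 1, u r ≠ 0) ∧
    ∃ Z : Finset ℝ, (Z : Set ℝ) = {r | r ∈ Set.Ioo (0 : ℝ) 1 ∧ u r = 0} ∧ Z.card = m - 1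

/-!
Let `ρ = ρ₁`. Zeros and critical points interlace, so `u` has no critical point in `(ρ, 1)`, and
Rolle's theorem on `[ρ, 1]` gives `u 1 ≠ 0`. The flux `w = r^{n-1} u'` satisfies
`w' = -|u|^{p-1} u r^{n-1}` and `w 1 = 0`. Integrating `u' = w r^{1-n}` over `[ρ, 1]` by parts
against `1 - (ρ/r)^{n-2}`, which vanishes at `ρ` and has derivative `(n-2) ρ^{n-2} r^{1-n}`, yields
`(n-2) ρ^{n-2} u(1) = ∫_ρ^1 |u|^{p-1} u s (s^{n-2} - ρ^{n-2}) ds`; dividing by `|u(1)|^{p-1} u(1)`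
gives the identity, since `p - 1 = 4/(n-2) - ε`.
-/

theorem abs_div_rpow_mul_div (x c q : ℝ) :
    |x / c| ^ q * (x / c) = (|c| ^ q * c)⁻¹ * (|x| ^ q * x) := by
  rw [abs_div, div_rpow (abs_nonneg x) (abs_nonneg c), div_eq_mul_inv, div_eq_mul_inv, mul_inv]
  ring

theorem hasDerivAt_one_sub_mul_inv_pow (d : ℕ) (c : ℝ) {x : ℝ} (hx : x ≠ 0) :
    HasDerivAt (fun s => 1 - c * (s ^ d)⁻¹) (d * c / x ^ (d + 1)) x := by
  refine ((((hasDerivAt_pow d x).inv (pow_ne_zero d hx)).const_mul c).const_sub 1).congr_deriv ?_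
  rcases d with _ | d
  · simp
  · rw [Nat.add_sub_cancel]
    field_simp
    ring

theorem mul_sub_eq_integral_of_hasDerivAt_flux {d : ℕ} {a b : ℝ} {u u' g : ℝ → ℝ}
    (ha : 0 < a) (hab : a ≤ b) (hu : ContinuousOn u (Icc a b))
    (hu' : ∀ x ∈ Ioo a b, HasDerivAt u (u' x) x)
    (hflux : ∀ x ∈ Icc a b, HasDerivAt (fun s => s ^ (d + 1) * u' s) (-(g x * x ^ (d + 1))) x)
    (hg : ContinuousOn g (Icc a b)) (hb : u' b = 0) :
    d * a ^ d * (u b - u a) = ∫ x in a..b, g x * x * (x ^ d - a ^ d) := by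
  rw [← uIcc_of_le hab] at hflux hg
  have hx0 : ∀ x ∈ uIcc a b, x ≠ 0 := fun x hx => (ha.trans_le (uIcc_of_le hab ▸ hx).1).ne'
  have hpow0 : ∀ x ∈ uIcc a b, x ^ (d + 1) ≠ 0 := fun x hx => pow_ne_zero _ (hx0 x hx)
  have hw : ContinuousOn (fun s => s ^ (d + 1) * u' s) (uIcc a b) :=
    fun x hx => (hflux x hx).continuousAt.continuousWithinAt
  have hu'_cont : ContinuousOn u' (uIcc a b) :=
    (hw.div (continuous_pow _).continuousOn hpow0).congr
      fun x hx => (mul_div_cancel_left₀ _ (hpow0 x hx)).symm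
  have hftc : ∫ x in a..b, u' x = u b - u a :=
    intervalIntegral.integral_eq_sub_of_hasDeriv_right_of_le hab hu
      (fun x hx => (hu' x hx).hasDerivWithinAt) hu'_cont.intervalIntegrable
  have hparts := intervalIntegral.integral_mul_deriv_eq_deriv_mul
    (fun x hx => hasDerivAt_one_sub_mul_inv_pow d (a ^ d) (hx0 x hx))
    hflux (continuousOn_const.div (continuous_pow _).continuousOn hpow0).intervalIntegrable
    (hg.mul (continuous_pow _).continuousOn).neg.intervalIntegrable
  have hlhs : ∫ x in a..b, (1 - a ^ d * (x ^ d)⁻¹) * -(g x * x ^ (d + 1)) =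
      -∫ x in a..b, g x * x * (x ^ d - a ^ d) := by
    rw [← intervalIntegral.integral_neg]
    refine intervalIntegral.integral_congr fun x hx => ?_
    have hx_ne := hx0 x hx
    field_simp
    ring
  have hrhs : ∫ x in a..b, d * a ^ d / x ^ (d + 1) * (x ^ (d + 1) * u' x) =
      d * a ^ d * (u b - u a) := by
    rw [← hftc, ← intervalIntegral.integral_const_mul]
    refine intervalIntegral.integral_congr fun x hx => ?_
    field_simp [hpow0 x hx]
  rw [hlhs, hrhs, hb, mul_zero, mul_inv_cancel₀ (pow_ne_zero d ha.ne')] at hparts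
  linarith

namespace IsRadialSolution

variable {n : ℕ} {p : ℝ} {u : ℝ → ℝ}

theorem differentiableAt (hu : IsRadialSolution n p u) {r : ℝ} (hr : r ∈ Ioo 0 1) :
    DifferentiableAt ℝ u r :=
  (hu.1.differentiableOn two_ne_zero r (Ioo_subset_Icc_self hr)).differentiableAt
    (Icc_mem_nhds hr.1 hr.2)

theorem differentiableAt_deriv (hu : IsRadialSolution n p u) {r : ℝ} (hr : r ∈ Ioo 0 1) :
    DifferentiableAt ℝ (deriv u) r :=
  (((hu.1.mono Ioo_subset_Icc_self).deriv_of_isOpen isOpen_Ioo le_rfl).differentiableOn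
    one_ne_zero r hr).differentiableAt (isOpen_Ioo.mem_nhds hr)

theorem hasDerivAt_flux_of_mem_Ioo (hu : IsRadialSolution n p u) {r : ℝ} (hr : r ∈ Ioo 0 1) :
    HasDerivAt (fun s => s ^ (n - 1) * deriv u s) (-(|u r| ^ (p - 1) * u r * r ^ (n - 1))) r := by
  rw [← hu.2.2 r (Ioo_subset_Ioc_self hr)]
  exact ((differentiableAt_pow _).mul (hu.differentiableAt_deriv hr)).hasDerivAt

/-- `IsRadialSolution` only controls `u` on `[0, 1]`, so at `r = 1` the flux is differentiable
only because its `deriv`, given by the equation, is nonzero there. -/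
theorem hasDerivAt_flux_of_ne_zero (hu : IsRadialSolution n p u) {r : ℝ} (hr : r ∈ Ioc 0 1)
    (hur : u r ≠ 0) :
    HasDerivAt (fun s => s ^ (n - 1) * deriv u s) (-(|u r| ^ (p - 1) * u r * r ^ (n - 1))) r := by
  rw [← hu.2.2 r hr]
  refine (differentiableAt_of_deriv_ne_zero ?_).hasDerivAt
  rw [hu.2.2 r hr, neg_ne_zero]
  exact mul_ne_zero (mul_ne_zero (rpow_pos_of_pos (abs_pos.2 hur) _).ne' hur)
    (pow_ne_zero _ hr.1.ne')

end IsRadialSolution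

namespace NeumannData

variable {n : ℕ} {p : ℝ} {m : ℕ} {u : ℝ → ℝ} {ρ δ : ℕ → ℝ}

theorem largest_zero (h : NeumannData n p m u ρ δ) (hm : 2 ≤ m) :
    ρ 1 ∈ Ioo 0 1 ∧ u (ρ 1) = 0 := by
  have : ρ 1 ∈ ρ '' Icc 1 (m - 1) := mem_image_of_mem ρ ⟨le_rfl, by omega⟩
  rwa [← h.2.2.2.2.2.2.1] at this

theorem critical_lt_largest_zero (h : NeumannData n p m u ρ δ) {j : ℕ} (hj : 2 ≤ j)
    (hjm : j ≤ m) : δ j < ρ 1 := by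
  induction j, hj using Nat.le_induction with
  | base => exact h.2.2.2.2.2.1 1 le_rfl (by omega)
  | succ j hj ih =>
    exact (h.2.2.2.2.2.1 j (by omega) (by omega)).trans
      ((h.2.2.2.2.1 j (by omega) (by omega)).trans (ih (by omega)))

theorem deriv_ne_zero (h : NeumannData n p m u ρ δ) (hm : 2 ≤ m) {x : ℝ}
    (hx : x ∈ Ioo (ρ 1) 1) : deriv u x ≠ 0 := by
  intro hux
  have hmem : x ∈ {r | r ∈ Icc (0 : ℝ) 1 ∧ deriv u r = 0} :=
    ⟨⟨((h.largest_zero hm).1.1.trans hx.1).le, hx.2.le⟩, hux⟩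
  rw [h.2.2.2.2.2.2.2] at hmem
  obtain ⟨j, ⟨hj1, hjm⟩, rfl⟩ := hmem
  rcases hj1.eq_or_lt with rfl | hj2
  · exact hx.2.ne h.2.2.1
  · exact (h.critical_lt_largest_zero hj2 hjm).not_gt hx.1

theorem apply_one_ne_zero (h : NeumannData n p m u ρ δ) (hm : 2 ≤ m) : u 1 ≠ 0 := by
  intro hu1
  obtain ⟨⟨hρ0, hρ1⟩, huρ⟩ := h.largest_zero hm
  obtain ⟨c, hc, hc0⟩ := exists_deriv_eq_zero hρ1
    (h.1.1.continuousOn.mono (Icc_subset_Icc hρ0.le le_rfl)) (huρ.trans hu1.symm)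
  exact h.deriv_ne_zero hm hc hc0

theorem hasDerivAt_flux (h : NeumannData n p m u ρ δ) (hm : 2 ≤ m) {x : ℝ}
    (hx : x ∈ Icc (ρ 1) 1) :
    HasDerivAt (fun s => s ^ (n - 1) * deriv u s) (-(|u x| ^ (p - 1) * u x * x ^ (n - 1))) x := by
  have hx0 : 0 < x := (h.largest_zero hm).1.1.trans_le hx.1
  rcases hx.2.lt_or_eq with hx1 | rfl
  · exact h.1.hasDerivAt_flux_of_mem_Ioo ⟨hx0, hx1⟩
  · exact h.1.hasDerivAt_flux_of_ne_zero ⟨hx0, le_rfl⟩ (h.apply_one_ne_zero hm)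

end NeumannData

/-- **Lemma 3.2.** For a radial Neumann solution `u` with exactly `m-1` interior zeros
and largest interior zero `ρ 1`: `u(1) ≠ 0` and
`|u(1)|^{4/(n-2)-ε} = (n-2) ρ₁^{n-2} / ∫_{ρ₁}^1 |u(s)/u(1)|^{4/(n-2)-ε} (u(s)/u(1)) s (s^{n-2}-ρ₁^{n-2}) ds`. -/
theorem neumann_integral_identity (n m : ℕ) (hn : 3 ≤ n) (hm : 2 ≤ m) (ε : ℝ)
    (hε : ε ∈ Set.Ioo (0 : ℝ) (4 / ((n : ℝ) - 2)))
    (u : ℝ → ℝ) (ρ δ : ℕ → ℝ)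
    (h : NeumannData n (pEps n ε) m u ρ δ) :
    u 1 ≠ 0 ∧
    |u 1| ^ ((4 : ℝ) / ((n : ℝ) - 2) - ε) =
      ((n : ℝ) - 2) * ρ 1 ^ (n - 2) /
        ∫ s in (ρ 1)..1,
          |u s / u 1| ^ ((4 : ℝ) / ((n : ℝ) - 2) - ε) * (u s / u 1) * s *
            (s ^ (n - 2) - ρ 1 ^ (n - 2)) := by
  obtain ⟨⟨hρ0, hρ1⟩, huρ⟩ := h.largest_zero hm
  have hu1 := h.apply_one_ne_zero hm
  refine ⟨hu1, ?_⟩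
  obtain ⟨d, rfl⟩ : ∃ d, n = d + 2 := ⟨n - 2, by omega⟩
  have hd : ((d + 2 : ℕ) : ℝ) - 2 = d := by push_cast; ring
  have hd0 : (d : ℝ) ≠ 0 := by exact_mod_cast (by omega : d ≠ 0)
  rw [hd] at hε
  rw [hd, Nat.add_sub_cancel]
  have hq : pEps (d + 2) ε - 1 = 4 / d - ε := by
    unfold pEps
    rw [hd]
    field_simp
    push_cast
    ring
  have hflux : ∀ x ∈ Icc (ρ 1) 1, HasDerivAt (fun s => s ^ (d + 1) * deriv u s)
      (-(|u x| ^ (4 / (d : ℝ) - ε) * u x * x ^ (d + 1))) x := fun x hx => by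
    simpa [hq] using h.hasDerivAt_flux hm hx
  have hu : ContinuousOn u (Icc (ρ 1) 1) :=
    h.1.1.continuousOn.mono (Icc_subset_Icc hρ0.le le_rfl)
  have hg : ContinuousOn (fun x => |u x| ^ (4 / (d : ℝ) - ε) * u x) (Icc (ρ 1) 1) :=
    (hu.abs.rpow_const fun _ _ => Or.inr (by linarith [hε.2])).mul hu
  have hid := mul_sub_eq_integral_of_hasDerivAt_flux hρ0 hρ1.le hu
    (fun x hx => (h.1.differentiableAt ⟨hρ0.trans hx.1, hx.2⟩).hasDerivAt) hflux hg h.2.1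
  have hscale : ∫ s in (ρ 1)..1, |u s / u 1| ^ (4 / (d : ℝ) - ε) * (u s / u 1) * s *
      (s ^ d - ρ 1 ^ d) = (|u 1| ^ (4 / (d : ℝ) - ε) * u 1)⁻¹ *
        ∫ s in (ρ 1)..1, |u s| ^ (4 / (d : ℝ) - ε) * u s * s * (s ^ d - ρ 1 ^ d) := by
    simp_rw [abs_div_rpow_mul_div, mul_assoc, intervalIntegral.integral_const_mul]
  rw [hscale, ← hid, huρ, sub_zero]
  have hu1q := (rpow_pos_of_pos (abs_pos.2 hu1) (4 / (d : ℝ) - ε)).ne'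
  field_simp
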